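/- Let K be an algebraically closed field complete with respect to a nontrivial nonarchimedean absolute value, and let K{x} be the Tate algebra with Gauss norm. For a ∈ K with |a| ≤ 1 and ρ ∈ [0,1], define a function |·|_{a,ρ} : K{x} → ℝ≥0 by |∑_n c_n (x−a)^n|_{a,ρ} = max_n |c_n| ρ^n (expanding every element of K{x} as a power series in (x−a)). Then |·|_{a,ρ} is a multiplicative seminorm on K{x} which is bounded by the Gauss norm: |f|_{a,ρ} ≤ ‖f‖_Gauss for all f. -/

import Mathlib

open Filter Topology Finset

section Alg
variable {R : Type*} [CommRing R]

lemma alt_sum (N : ℕ) (hN : N ≠ 0) :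
    ∑ m ∈ range (N + 1), (N.choose m : R) * (-1 : R) ^ (N - m) = 0 := by
  have h := add_pow (1 : R) (-1) N
  rw [add_neg_cancel, zero_pow hN] at h
  rw [h]
  exact Finset.sum_congr rfl fun m _ => by ring

lemma key_alg (a : R) (n j : ℕ) :
    ∑ k ∈ range (n + 1), (n.choose k : R) * (-a) ^ (n - k) * (k.choose j : R) * a ^ (k - j)
      = if n = j then 1 else 0 := by
  rcases lt_trichotomy n j with h | rfl | h
  · rw [if_neg h.ne, Finset.sum_eq_zero]
    intro k hk
    rw [Finset.mem_range] at hk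
    rw [Nat.choose_eq_zero_of_lt (show k < j by omega)]
    push_cast; ring
  · rw [if_pos rfl, Finset.sum_eq_single_of_mem n (self_mem_range_succ n)]
    · simp
    · intro k hk hkn
      rw [Finset.mem_range] at hk
      rw [Nat.choose_eq_zero_of_lt (show k < n by omega)]
      push_cast; ring
  · rw [if_neg (by omega)]
    have hsub : Finset.Ico j (n + 1) ⊆ Finset.range (n + 1) := by
      intro k hk; rw [Finset.mem_Ico] at hk; rw [Finset.mem_range]; omega
    rw [← Finset.sum_subset hsub (by
      intro k hk hk'
      rw [Finset.mem_range] at hk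
      rw [Finset.mem_Ico] at hk'
      rw [Nat.choose_eq_zero_of_lt (show k < j by omega)]
      push_cast; ring)]
    rw [Finset.sum_Ico_eq_sum_range]
    have hr : n + 1 - j = (n - j) + 1 := by omega
    rw [hr]
    have hcongr : ∀ m ∈ range ((n - j) + 1),
        (n.choose (j + m) : R) * (-a) ^ (n - (j + m)) * ((j + m).choose j : R) * a ^ (j + m - j)
          = ((n.choose j : R) * a ^ (n - j)) * (((n - j).choose m : R) * (-1 : R) ^ ((n - j) - m)) := by
      intro m hm
      rw [Finset.mem_range] at hm
      have hc := Nat.choose_mul (n := n) (show j ≤ j + m by omega)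
      rw [show j + m - j = m from by omega] at hc
      have hcR : (n.choose (j + m) : R) * ((j + m).choose j : R)
          = (n.choose j : R) * ((n - j).choose m : R) := by exact_mod_cast congrArg (Nat.cast : ℕ → R) hc
      have e1 : n - (j + m) = (n - j) - m := by omega
      have e2 : j + m - j = m := by omega
      have e3 : (n - j) - m + m = n - j := by omega
      calc (n.choose (j + m) : R) * (-a) ^ (n - (j + m)) * ((j + m).choose j : R) * a ^ (j + m - j)
          = ((n.choose (j + m) : R) * ((j + m).choose j : R)) * ((-a) ^ ((n - j) - m) * a ^ m) := by
            rw [e1, e2]; ring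
        _ = ((n.choose j : R) * ((n - j).choose m : R)) * ((-1 : R) ^ ((n - j) - m) * (a ^ ((n - j) - m) * a ^ m)) := by
            rw [hcR, neg_pow]; ring
        _ = ((n.choose j : R) * a ^ (n - j)) * (((n - j).choose m : R) * (-1 : R) ^ ((n - j) - m)) := by
            rw [← pow_add, e3]; ring
    rw [Finset.sum_congr rfl hcongr, ← Finset.mul_sum, alt_sum (n - j) (by omega), mul_zero]

lemma key_alg2 (a : R) (m l k : ℕ) :
    ∑ pq ∈ Finset.HasAntidiagonal.antidiagonal k,
      ((m.choose pq.1 : R) * (-a) ^ (m - pq.1)) * ((l.choose pq.2 : R) * (-a) ^ (l - pq.2))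
      = ((m + l).choose k : R) * (-a) ^ (m + l - k) := by
  rw [Nat.add_choose_eq, Nat.cast_sum, Finset.sum_mul]
  apply Finset.sum_congr rfl
  rintro ⟨p, q⟩ hpq
  rw [Finset.HasAntidiagonal.mem_antidiagonal] at hpq
  by_cases hp : p ≤ m ∧ q ≤ l
  · have e : m - p + (l - q) = m + l - k := by omega
    rw [← e, pow_add]; push_cast; ring
  · rcases not_and_or.mp hp with hp | hq
    · rw [Nat.choose_eq_zero_of_lt (show m < p by omega)]
      push_cast; ring
    · rw [Nat.choose_eq_zero_of_lt (show l < q by omega)]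
      push_cast; ring

end Alg

section Sup

lemma iSup_zero_radius {w : ℕ → ℝ} (hnn : ∀ n, 0 ≤ w n) :
    ⨆ n : ℕ, w n * (0 : ℝ) ^ n = w 0 := by
  apply le_antisymm
  · apply ciSup_le
    intro n
    cases n with
    | zero => simp
    | succ m => simp [zero_pow (Nat.succ_ne_zero m), hnn 0]
  · have hb : BddAbove (Set.range fun n : ℕ => w n * (0 : ℝ) ^ n) := by
      refine ⟨w 0, ?_⟩
      rintro y ⟨n, rfl⟩
      cases n with
      | zero => simp
      | succ m => simp [zero_pow (Nat.succ_ne_zero m), hnn 0]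
    simpa using le_ciSup hb 0

lemma exists_ciSup_eq {u : ℕ → ℝ} (hu : Tendsto u atTop (𝓝 (0 : ℝ)))
    (hpos : 0 < ⨆ n, u n) : ∃ n, u n = ⨆ n, u n := by
  by_contra h
  push_neg at h
  set S := ⨆ n, u n with hS
  have hb : BddAbove (Set.range u) := hu.bddAbove_range
  have hlt : ∀ n, u n < S := fun n => lt_of_le_of_ne (le_ciSup hb n) (h n)
  obtain ⟨N, hN⟩ := Filter.eventually_atTop.mp (hu.eventually (gt_mem_nhds (half_pos hpos)))
  have hne : (Finset.range (N + 1)).Nonempty := ⟨0, by simp⟩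
  set M := (Finset.range (N + 1)).sup' hne u with hM
  have hMb : ∀ n, u n ≤ max M (S / 2) := by
    intro n
    rcases le_or_gt n N with h1 | h1
    · exact le_max_of_le_left (Finset.le_sup' u (Finset.mem_range.mpr (by omega)))
    · exact le_max_of_le_right (hN n (by omega)).le
  have hSle : S ≤ max M (S / 2) := ciSup_le hMb
  have hMlt : M < S := (Finset.sup'_lt_iff hne).mpr fun b _ => hlt b
  have : max M (S / 2) < S := max_lt hMlt (by linarith)
  exact absurd (lt_of_le_of_lt hSle this) (lt_irrefl S)

end Sup

section Anal
variable {K : Type*} [NormedField K] [IsUltrametricDist K]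

lemma summable_of_norm_le_null [CompleteSpace K] {u : ℕ → K} {v : ℕ → ℝ}
    (hv : Tendsto v atTop (𝓝 (0 : ℝ))) (h : ∀ n, ‖u n‖ ≤ v n) : Summable u := by
  apply NonarchimedeanAddGroup.summable_of_tendsto_cofinite_zero
  rw [Nat.cofinite_eq_atTop]
  exact squeeze_zero_norm h hv

lemma norm_factor_le_one {b : K} (hb : ‖b‖ ≤ 1) (m e : ℕ) : ‖(m : K) * b ^ e‖ ≤ 1 := by
  rw [norm_mul, norm_pow]
  have h1 : ‖(m : K)‖ ≤ 1 := IsUltrametricDist.norm_natCast_le_one K m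
  have h2 : (0:ℝ) ≤ ‖b‖ ^ e := pow_nonneg (norm_nonneg b) e
  have h3 : ‖b‖ ^ e ≤ 1 := pow_le_one₀ (norm_nonneg b) hb
  nlinarith [norm_nonneg (m : K)]

lemma norm_cnb_le {b : K} (hb : ‖b‖ ≤ 1) (x : K) (m e : ℕ) :
    ‖x * ((m : K) * b ^ e)‖ ≤ ‖x‖ := by
  rw [norm_mul]
  nlinarith [norm_factor_le_one hb m e, norm_nonneg x, norm_nonneg ((m : K) * b ^ e)]

lemma inv_transform [CompleteSpace K] {a : K} (ha : ‖a‖ ≤ 1) {c : ℕ → K}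
    (hc : Tendsto (fun n => ‖c n‖) atTop (𝓝 (0 : ℝ))) (j : ℕ) :
    ∑' k : ℕ, (∑' n : ℕ, c n * (n.choose k : K) * (-a) ^ (n - k)) * (k.choose j : K) * a ^ (k - j)
      = c j := by
  have hna : ‖-a‖ ≤ 1 := by rwa [norm_neg]
  set u : ℕ → ℕ → K := fun k n =>
    c n * ((n.choose k : K) * (-a) ^ (n - k)) * ((k.choose j : K) * a ^ (k - j)) with hu
  have hbd : ∀ k n, ‖u k n‖ ≤ ‖c n‖ := by
    intro k n
    calc ‖u k n‖ = ‖(c n * ((n.choose k : K) * (-a) ^ (n - k))) * ((k.choose j : K) * a ^ (k - j))‖ := rfl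
      _ ≤ ‖c n * ((n.choose k : K) * (-a) ^ (n - k))‖ := norm_cnb_le ha _ _ _
      _ ≤ ‖c n‖ := norm_cnb_le hna _ _ _
  have huz : ∀ k n, n < k → u k n = 0 := by
    intro k n hn
    simp [hu, Nat.choose_eq_zero_of_lt hn]
  have hsum2 : Summable (Function.uncurry u) := by
    apply NonarchimedeanAddGroup.summable_of_tendsto_cofinite_zero
    rw [Metric.tendsto_nhds]
    intro ε hε
    rw [Filter.eventually_cofinite]
    obtain ⟨N, hN⟩ := Filter.eventually_atTop.mp (hc.eventually (gt_mem_nhds hε))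
    apply Set.Finite.subset ((Set.finite_Iic N).prod (Set.finite_Iic N))
    intro p hp
    simp only [Set.mem_setOf_eq, not_lt, dist_zero_right] at hp
    have hup : ε ≤ ‖u p.1 p.2‖ := hp
    have hkn : p.1 ≤ p.2 := by
      by_contra hlt
      rw [huz p.1 p.2 (by omega)] at hup
      simp only [norm_zero] at hup
      linarith
    have hn : p.2 ≤ N := by
      by_contra hgt
      have := hN p.2 (by omega)
      have := le_trans hup (hbd p.1 p.2)
      linarith
    exact ⟨le_trans hkn hn, hn⟩
  -- rewrite LHS as iterated tsum of u
  have hstep1 : ∀ k : ℕ,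
      (∑' n : ℕ, c n * (n.choose k : K) * (-a) ^ (n - k)) * (k.choose j : K) * a ^ (k - j)
        = ∑' n : ℕ, u k n := by
    intro k
    rw [mul_assoc, ← tsum_mul_right]
    exact tsum_congr fun n => by simp only [hu]; ring
  calc ∑' k : ℕ, (∑' n : ℕ, c n * (n.choose k : K) * (-a) ^ (n - k)) * (k.choose j : K) * a ^ (k - j)
      = ∑' (k : ℕ) (n : ℕ), u k n := tsum_congr hstep1
    _ = ∑' (n : ℕ) (k : ℕ), u k n := (Summable.tsum_comm hsum2).symm
    _ = ∑' n : ℕ, ∑ k ∈ range (n + 1), u k n := by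
        refine tsum_congr fun n => tsum_eq_sum fun k hk => ?_
        rw [Finset.mem_range, not_lt] at hk
        simp [hu, Nat.choose_eq_zero_of_lt (show n < k by omega)]
    _ = ∑' n : ℕ, c n * (if n = j then 1 else 0) := by
        refine tsum_congr fun n => ?_
        rw [← key_alg a n j, Finset.mul_sum]
        exact Finset.sum_congr rfl fun k _ => by simp only [hu]; ring
    _ = c j := by
        rw [tsum_eq_single j (fun n hn => by simp [hn])]
        simp

lemma summable_of_norm_le_summable {ι : Type*} [CompleteSpace K] {u w : ι → K}
    (hw : Summable w) (h : ∀ i, ‖u i‖ ≤ ‖w i‖) : Summable u := by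
  apply NonarchimedeanAddGroup.summable_of_tendsto_cofinite_zero
  refine squeeze_zero_norm h ?_
  simpa using hw.tendsto_cofinite_zero.norm

lemma exists_pos_bound {c d : ℕ → ℝ} (hc : Tendsto c atTop (𝓝 (0 : ℝ)))
    (hd : Tendsto d atTop (𝓝 (0 : ℝ))) :
    ∃ B : ℝ, 0 < B ∧ (∀ n, c n ≤ B) ∧ ∀ n, d n ≤ B := by
  obtain ⟨B1, hB1⟩ := hc.bddAbove_range
  obtain ⟨B2, hB2⟩ := hd.bddAbove_range
  have h1 : ∀ n, c n ≤ B1 := fun n => hB1 (Set.mem_range_self n)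
  have h2 : ∀ n, d n ≤ B2 := fun n => hB2 (Set.mem_range_self n)
  refine ⟨|B1| + |B2| + 1, by positivity, fun n => ?_, fun n => ?_⟩
  · have := h1 n; have := abs_nonneg B2; have := le_abs_self B1; linarith
  · have := h2 n; have := abs_nonneg B1; have := le_abs_self B2; linarith

lemma tendsto_mul_cofinite {c d : ℕ → K}
    (hc : Tendsto (fun n => ‖c n‖) atTop (𝓝 (0 : ℝ)))
    (hd : Tendsto (fun n => ‖d n‖) atTop (𝓝 (0 : ℝ))) :
    Tendsto (fun x : ℕ × ℕ => c x.1 * d x.2) cofinite (𝓝 (0 : K)) := by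
  obtain ⟨B, hB0, hBc, hBd⟩ := exists_pos_bound hc hd
  rw [Metric.tendsto_nhds]
  intro ε hε
  rw [Filter.eventually_cofinite]
  have hεB : 0 < ε / B := div_pos hε hB0
  obtain ⟨N, hN⟩ := Filter.eventually_atTop.mp (hc.eventually (gt_mem_nhds hεB))
  obtain ⟨M, hM⟩ := Filter.eventually_atTop.mp (hd.eventually (gt_mem_nhds hεB))
  apply Set.Finite.subset ((Set.finite_Iic N).prod (Set.finite_Iic M))
  intro p hp
  simp only [Set.mem_setOf_eq, not_lt, dist_zero_right, norm_mul] at hp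
  have hεeq : (ε / B) * B = ε := div_mul_cancel₀ _ hB0.ne'
  constructor
  · show p.1 ≤ N
    by_contra hgt
    have hlt : ‖c p.1‖ < ε / B := hN p.1 (by omega)
    have hle : ‖d p.2‖ ≤ B := hBd p.2
    nlinarith [norm_nonneg (c p.1), norm_nonneg (d p.2)]
  · show p.2 ≤ M
    by_contra hgt
    have hlt : ‖d p.2‖ < ε / B := hM p.2 (by omega)
    have hle : ‖c p.1‖ ≤ B := hBc p.1
    nlinarith [norm_nonneg (c p.1), norm_nonneg (d p.2)]

lemma tsum_antidiagonal_eq [CompleteSpace K] {V : ℕ × ℕ → K} (hV : Summable V) :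
    ∑' x : ℕ × ℕ, V x = ∑' n : ℕ, ∑ ij ∈ Finset.HasAntidiagonal.antidiagonal n, V ij := by
  calc ∑' x : ℕ × ℕ, V x
      = ∑' σ : Σ n : ℕ, Finset.HasAntidiagonal.antidiagonal n, V (Finset.HasAntidiagonal.sigmaAntidiagonalEquivProd σ) :=
        (Finset.HasAntidiagonal.sigmaAntidiagonalEquivProd.tsum_eq V).symm
    _ = ∑' (n : ℕ) (x : Finset.HasAntidiagonal.antidiagonal n), V (Finset.HasAntidiagonal.sigmaAntidiagonalEquivProd ⟨n, x⟩) :=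
        Summable.tsum_sigma' (fun n => (hasSum_fintype _).summable)
          (Finset.HasAntidiagonal.sigmaAntidiagonalEquivProd.summable_iff.mpr hV)
    _ = ∑' n : ℕ, ∑ ij ∈ Finset.HasAntidiagonal.antidiagonal n, V ij :=
        tsum_congr fun n => Finset.tsum_subtype _ V

lemma conv_transform [CompleteSpace K] {a : K} (ha : ‖a‖ ≤ 1) {c d : ℕ → K}
    (hc : Tendsto (fun n => ‖c n‖) atTop (𝓝 (0 : ℝ)))
    (hd : Tendsto (fun n => ‖d n‖) atTop (𝓝 (0 : ℝ))) (k : ℕ) :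
    ∑' n : ℕ, (∑ ij ∈ Finset.HasAntidiagonal.antidiagonal n, c ij.1 * d ij.2) * (n.choose k : K) * (-a) ^ (n - k)
      = ∑ pq ∈ Finset.HasAntidiagonal.antidiagonal k,
          (∑' m : ℕ, c m * (m.choose pq.1 : K) * (-a) ^ (m - pq.1)) *
          (∑' l : ℕ, d l * (l.choose pq.2 : K) * (-a) ^ (l - pq.2)) := by
  have hna : ‖-a‖ ≤ 1 := by rwa [norm_neg]
  set V : ℕ × ℕ → K := fun x =>
    (c x.1 * d x.2) * (((x.1 + x.2).choose k : K) * (-a) ^ (x.1 + x.2 - k)) with hV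
  have hprod : Summable (fun x : ℕ × ℕ => c x.1 * d x.2) :=
    NonarchimedeanAddGroup.summable_of_tendsto_cofinite_zero (tendsto_mul_cofinite hc hd)
  have hVs : Summable V :=
    summable_of_norm_le_summable hprod fun x => norm_cnb_le hna _ _ _
  have hA : ∀ p : ℕ, Summable (fun m => c m * (m.choose p : K) * (-a) ^ (m - p)) := fun p =>
    summable_of_norm_le_null hc fun m => by rw [mul_assoc]; exact norm_cnb_le hna _ _ _
  have hB : ∀ q : ℕ, Summable (fun l => d l * (l.choose q : K) * (-a) ^ (l - q)) := fun q =>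
    summable_of_norm_le_null hd fun l => by rw [mul_assoc]; exact norm_cnb_le hna _ _ _
  have hW : ∀ pq : ℕ × ℕ, Summable (fun x : ℕ × ℕ =>
      (c x.1 * (x.1.choose pq.1 : K) * (-a) ^ (x.1 - pq.1)) *
      (d x.2 * (x.2.choose pq.2 : K) * (-a) ^ (x.2 - pq.2))) := by
    intro pq
    apply summable_of_norm_le_summable hprod
    intro x
    rw [show ‖c x.1 * d x.2‖ = ‖c x.1‖ * ‖d x.2‖ from norm_mul _ _, norm_mul]
    have h1 : ‖c x.1 * (x.1.choose pq.1 : K) * (-a) ^ (x.1 - pq.1)‖ ≤ ‖c x.1‖ := by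
      rw [mul_assoc]; exact norm_cnb_le hna _ _ _
    have h2 : ‖d x.2 * (x.2.choose pq.2 : K) * (-a) ^ (x.2 - pq.2)‖ ≤ ‖d x.2‖ := by
      rw [mul_assoc]; exact norm_cnb_le hna _ _ _
    exact mul_le_mul h1 h2 (norm_nonneg _) (norm_nonneg _)
  calc ∑' n : ℕ, (∑ ij ∈ Finset.HasAntidiagonal.antidiagonal n, c ij.1 * d ij.2) * (n.choose k : K) * (-a) ^ (n - k)
      = ∑' n : ℕ, ∑ ij ∈ Finset.HasAntidiagonal.antidiagonal n, V ij := by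
        refine tsum_congr fun n => ?_
        rw [Finset.sum_mul, Finset.sum_mul]
        refine Finset.sum_congr rfl fun ij hij => ?_
        rw [Finset.HasAntidiagonal.mem_antidiagonal] at hij
        simp only [hV, hij]
        ring
    _ = ∑' x : ℕ × ℕ, V x := (tsum_antidiagonal_eq hVs).symm
    _ = ∑' x : ℕ × ℕ, ∑ pq ∈ Finset.HasAntidiagonal.antidiagonal k,
          (c x.1 * (x.1.choose pq.1 : K) * (-a) ^ (x.1 - pq.1)) *
          (d x.2 * (x.2.choose pq.2 : K) * (-a) ^ (x.2 - pq.2)) := by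
        refine tsum_congr fun x => ?_
        have := key_alg2 a x.1 x.2 k
        calc V x = (c x.1 * d x.2) * ∑ pq ∈ Finset.HasAntidiagonal.antidiagonal k,
              ((x.1.choose pq.1 : K) * (-a) ^ (x.1 - pq.1)) *
              ((x.2.choose pq.2 : K) * (-a) ^ (x.2 - pq.2)) := by rw [this]
          _ = _ := by rw [Finset.mul_sum]; exact Finset.sum_congr rfl fun pq _ => by ring
    _ = ∑ pq ∈ Finset.HasAntidiagonal.antidiagonal k, ∑' x : ℕ × ℕ,
          (c x.1 * (x.1.choose pq.1 : K) * (-a) ^ (x.1 - pq.1)) *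
          (d x.2 * (x.2.choose pq.2 : K) * (-a) ^ (x.2 - pq.2)) := by
        exact (Summable.tsum_finsetSum fun pq _ => hW pq)
    _ = ∑ pq ∈ Finset.HasAntidiagonal.antidiagonal k,
          (∑' m : ℕ, c m * (m.choose pq.1 : K) * (-a) ^ (m - pq.1)) *
          (∑' l : ℕ, d l * (l.choose pq.2 : K) * (-a) ^ (l - pq.2)) := by
        refine Finset.sum_congr rfl fun pq _ => ?_
        exact (Summable.tsum_mul_tsum (hA pq.1) (hB pq.2) (hW pq)).symm

lemma gauss_tendsto {c : ℕ → K} (hc : Tendsto (fun n => ‖c n‖) atTop (𝓝 (0 : ℝ)))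
    {ρ : ℝ} (hρ0 : 0 ≤ ρ) (hρ1 : ρ ≤ 1) :
    Tendsto (fun n => ‖c n‖ * ρ ^ n) atTop (𝓝 (0 : ℝ)) := by
  refine squeeze_zero (fun n => by positivity) (fun n => ?_) hc
  have h1 : ρ ^ n ≤ 1 := pow_le_one₀ hρ0 hρ1
  nlinarith [norm_nonneg (c n), pow_nonneg hρ0 n]

lemma gauss_nonneg {c : ℕ → K} (hc : Tendsto (fun n => ‖c n‖) atTop (𝓝 (0 : ℝ)))
    {ρ : ℝ} (hρ0 : 0 ≤ ρ) (hρ1 : ρ ≤ 1) : 0 ≤ ⨆ n : ℕ, ‖c n‖ * ρ ^ n := by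
  have hb := (gauss_tendsto hc hρ0 hρ1).bddAbove_range
  exact le_trans (by positivity) (le_ciSup hb 0)


lemma gauss_mul {c d : ℕ → K}
    (hc : Tendsto (fun n => ‖c n‖) atTop (𝓝 (0 : ℝ)))
    (hd : Tendsto (fun n => ‖d n‖) atTop (𝓝 (0 : ℝ)))
    {ρ : ℝ} (hρ0 : 0 ≤ ρ) (hρ1 : ρ ≤ 1) :
    (⨆ n : ℕ, ‖∑ ij ∈ Finset.HasAntidiagonal.antidiagonal n, c ij.1 * d ij.2‖ * ρ ^ n)
      = (⨆ n : ℕ, ‖c n‖ * ρ ^ n) * (⨆ n : ℕ, ‖d n‖ * ρ ^ n) := by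
  rcases eq_or_lt_of_le hρ0 with hρ | hρ
  · -- ρ = 0
    rw [← hρ, iSup_zero_radius (fun n => norm_nonneg _),
      iSup_zero_radius (fun n => norm_nonneg _), iSup_zero_radius (fun n => norm_nonneg _)]
    simp [Finset.Nat.antidiagonal_zero, norm_mul]
  -- ρ > 0
  have htu : Tendsto (fun n => ‖c n‖ * ρ ^ n) atTop (𝓝 (0 : ℝ)) := gauss_tendsto hc hρ0 hρ1
  have htv : Tendsto (fun n => ‖d n‖ * ρ ^ n) atTop (𝓝 (0 : ℝ)) := gauss_tendsto hd hρ0 hρ1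
  have hbu : BddAbove (Set.range fun n => ‖c n‖ * ρ ^ n) := htu.bddAbove_range
  have hbv : BddAbove (Set.range fun n => ‖d n‖ * ρ ^ n) := htv.bddAbove_range
  set Sc := ⨆ n : ℕ, ‖c n‖ * ρ ^ n with hSc
  set Sd := ⨆ n : ℕ, ‖d n‖ * ρ ^ n with hSd
  have hSc0 : 0 ≤ Sc := gauss_nonneg hc hρ0 hρ1
  have hSd0 : 0 ≤ Sd := gauss_nonneg hd hρ0 hρ1
  have huSc : ∀ n, ‖c n‖ * ρ ^ n ≤ Sc := fun n => le_ciSup hbu n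
  have hvSd : ∀ n, ‖d n‖ * ρ ^ n ≤ Sd := fun n => le_ciSup hbv n
  have hczero : Sc = 0 → ∀ n, c n = 0 := by
    intro h0 n
    have h1 : ‖c n‖ * ρ ^ n ≤ 0 := (huSc n).trans h0.le
    have h2 : (0 : ℝ) < ρ ^ n := pow_pos hρ n
    have : ‖c n‖ = 0 := by nlinarith [norm_nonneg (c n)]
    simpa using this
  have hdzero : Sd = 0 → ∀ n, d n = 0 := by
    intro h0 n
    have h1 : ‖d n‖ * ρ ^ n ≤ 0 := (hvSd n).trans h0.le
    have h2 : (0 : ℝ) < ρ ^ n := pow_pos hρ n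
    have : ‖d n‖ = 0 := by nlinarith [norm_nonneg (d n)]
    simpa using this
  rcases eq_or_lt_of_le hSc0 with hc0 | hc0
  · have hez : ∀ n : ℕ, (∑ ij ∈ Finset.HasAntidiagonal.antidiagonal n, c ij.1 * d ij.2) = 0 := fun n =>
      Finset.sum_eq_zero fun ij _ => by rw [hczero hc0.symm ij.1, zero_mul]
    rw [← hc0, zero_mul]
    rw [show (fun n : ℕ => ‖∑ ij ∈ Finset.HasAntidiagonal.antidiagonal n, c ij.1 * d ij.2‖ * ρ ^ n)
        = fun _ : ℕ => (0 : ℝ) from funext fun n => by rw [hez n, norm_zero, zero_mul]]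
    exact ciSup_const
  rcases eq_or_lt_of_le hSd0 with hd0 | hd0
  · have hez : ∀ n : ℕ, (∑ ij ∈ Finset.HasAntidiagonal.antidiagonal n, c ij.1 * d ij.2) = 0 := fun n =>
      Finset.sum_eq_zero fun ij _ => by rw [hdzero hd0.symm ij.2, mul_zero]
    rw [← hd0, mul_zero]
    rw [show (fun n : ℕ => ‖∑ ij ∈ Finset.HasAntidiagonal.antidiagonal n, c ij.1 * d ij.2‖ * ρ ^ n)
        = fun _ : ℕ => (0 : ℝ) from funext fun n => by rw [hez n, norm_zero, zero_mul]]
    exact ciSup_const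
  -- main case
  have hbound : ∀ n, ‖∑ ij ∈ Finset.HasAntidiagonal.antidiagonal n, c ij.1 * d ij.2‖ * ρ ^ n ≤ Sc * Sd := by
    intro n
    have hpow : (0 : ℝ) < ρ ^ n := pow_pos hρ n
    rw [← le_div_iff₀ hpow]
    apply IsUltrametricDist.norm_sum_le_of_forall_le_of_nonneg
    · positivity
    · rintro ⟨i, j⟩ hij
      rw [Finset.HasAntidiagonal.mem_antidiagonal] at hij
      rw [le_div_iff₀ hpow, norm_mul]
      calc ‖c i‖ * ‖d j‖ * ρ ^ n = (‖c i‖ * ρ ^ i) * (‖d j‖ * ρ ^ j) := by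
            rw [← hij, pow_add]; ring
        _ ≤ Sc * Sd := mul_le_mul (huSc i) (hvSd j) (by positivity) hSc0
  have hbe : BddAbove (Set.range fun n => ‖∑ ij ∈ Finset.HasAntidiagonal.antidiagonal n, c ij.1 * d ij.2‖ * ρ ^ n) :=
    ⟨Sc * Sd, by rintro y ⟨n, rfl⟩; exact hbound n⟩
  have hPc : ∃ n, ‖c n‖ * ρ ^ n = Sc := exists_ciSup_eq htu hc0
  have hPd : ∃ n, ‖d n‖ * ρ ^ n = Sd := exists_ciSup_eq htv hd0
  obtain ⟨i0, hui0, hmin_c⟩ : ∃ i0, ‖c i0‖ * ρ ^ i0 = Sc ∧ ∀ i < i0, ‖c i‖ * ρ ^ i < Sc :=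
    ⟨Nat.find hPc, Nat.find_spec hPc, fun i hi =>
      lt_of_le_of_ne (huSc i) (Nat.find_min hPc hi)⟩
  obtain ⟨j0, hvj0, hmin_d⟩ : ∃ j0, ‖d j0‖ * ρ ^ j0 = Sd ∧ ∀ j < j0, ‖d j‖ * ρ ^ j < Sd :=
    ⟨Nat.find hPd, Nat.find_spec hPd, fun j hj =>
      lt_of_le_of_ne (hvSd j) (Nat.find_min hPd hj)⟩
  have hpow0 : (0 : ℝ) < ρ ^ (i0 + j0) := pow_pos hρ _
  have hxval : ‖c i0 * d j0‖ * ρ ^ (i0 + j0) = Sc * Sd := by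
    rw [norm_mul, pow_add, ← hui0, ← hvj0]; ring
  have hxpos : 0 < ‖c i0 * d j0‖ := by
    rcases (norm_nonneg (c i0 * d j0)).lt_or_eq with h | h
    · exact h
    · exfalso; rw [← h, zero_mul] at hxval; nlinarith
  have hmem : (i0, j0) ∈ Finset.HasAntidiagonal.antidiagonal (i0 + j0) := Finset.HasAntidiagonal.mem_antidiagonal.mpr rfl
  have hterm_lt : ∀ ij ∈ (Finset.HasAntidiagonal.antidiagonal (i0 + j0)).erase (i0, j0),
      ‖c ij.1 * d ij.2‖ < ‖c i0 * d j0‖ := by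
    rintro ⟨i, j⟩ hij
    rw [Finset.mem_erase, Finset.HasAntidiagonal.mem_antidiagonal] at hij
    obtain ⟨hne, hsum⟩ := hij
    have key : ‖c i * d j‖ * ρ ^ (i0 + j0) < Sc * Sd := by
      have heq : ‖c i * d j‖ * ρ ^ (i0 + j0) = (‖c i‖ * ρ ^ i) * (‖d j‖ * ρ ^ j) := by
        rw [norm_mul, ← hsum, pow_add]; ring
      rw [heq]
      rcases lt_or_ge i i0 with hi | hi
      · have h1 : ‖c i‖ * ρ ^ i < Sc := hmin_c i hi
        have h2 : ‖d j‖ * ρ ^ j ≤ Sd := hvSd j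
        have h3 : (0 : ℝ) ≤ ‖c i‖ * ρ ^ i := by positivity
        have h4 : (0 : ℝ) ≤ ‖d j‖ * ρ ^ j := by positivity
        nlinarith
      · have hj : j < j0 := by
          rcases lt_or_eq_of_le hi with hi' | hi'
          · omega
          · exfalso
            apply hne
            have : j = j0 := by omega
            rw [this, ← hi']
        have h1 : ‖d j‖ * ρ ^ j < Sd := hmin_d j hj
        have h2 : ‖c i‖ * ρ ^ i ≤ Sc := huSc i
        have h3 : (0 : ℝ) ≤ ‖c i‖ * ρ ^ i := by positivity
        have h4 : (0 : ℝ) ≤ ‖d j‖ * ρ ^ j := by positivity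
        nlinarith
    rw [← hxval] at key
    exact lt_of_mul_lt_mul_right key hpow0.le
  have hrlt : ‖∑ ij ∈ (Finset.HasAntidiagonal.antidiagonal (i0 + j0)).erase (i0, j0),
      c ij.1 * d ij.2‖ < ‖c i0 * d j0‖ := by
    rcases Finset.eq_empty_or_nonempty ((Finset.HasAntidiagonal.antidiagonal (i0 + j0)).erase (i0, j0)) with h | h
    · rw [h, Finset.sum_empty, norm_zero]; exact hxpos
    · refine lt_of_le_of_lt (h.norm_sum_le_sup'_norm _) ?_
      exact (Finset.sup'_lt_iff h).mpr fun ij hij => hterm_lt ij hij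
  have hen0 : ‖∑ ij ∈ Finset.HasAntidiagonal.antidiagonal (i0 + j0), c ij.1 * d ij.2‖ = ‖c i0 * d j0‖ := by
    rw [← Finset.add_sum_erase _ _ hmem]
    rw [IsUltrametricDist.norm_add_eq_max_of_norm_ne_norm (ne_of_gt hrlt)]
    exact max_eq_left hrlt.le
  apply le_antisymm
  · exact ciSup_le hbound
  · calc Sc * Sd = ‖∑ ij ∈ Finset.HasAntidiagonal.antidiagonal (i0 + j0), c ij.1 * d ij.2‖ * ρ ^ (i0 + j0) := by rw [hen0, hxval]
      _ ≤ ⨆ n, ‖∑ ij ∈ Finset.HasAntidiagonal.antidiagonal n, c ij.1 * d ij.2‖ * ρ ^ n := le_ciSup hbe (i0 + j0)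

lemma conv_tendsto {c d : ℕ → K}
    (hc : Tendsto (fun n => ‖c n‖) atTop (𝓝 (0 : ℝ)))
    (hd : Tendsto (fun n => ‖d n‖) atTop (𝓝 (0 : ℝ))) :
    Tendsto (fun n => ‖∑ ij ∈ Finset.HasAntidiagonal.antidiagonal n, c ij.1 * d ij.2‖) atTop (𝓝 (0 : ℝ)) := by
  obtain ⟨B, hB0, hBc, hBd⟩ := exists_pos_bound hc hd
  rw [Metric.tendsto_atTop]
  intro ε hε
  have hε2 : (0 : ℝ) < ε / 2 / B := by positivity
  obtain ⟨N, hN⟩ := Filter.eventually_atTop.mp (hc.eventually (gt_mem_nhds hε2))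
  obtain ⟨M, hM⟩ := Filter.eventually_atTop.mp (hd.eventually (gt_mem_nhds hε2))
  refine ⟨N + M, fun n hn => ?_⟩
  rw [Real.dist_eq, sub_zero, abs_of_nonneg (norm_nonneg _)]
  have hcancel : (ε / 2 / B) * B = ε / 2 := div_mul_cancel₀ _ hB0.ne'
  have hb : ‖∑ ij ∈ Finset.HasAntidiagonal.antidiagonal n, c ij.1 * d ij.2‖ ≤ ε / 2 := by
    apply IsUltrametricDist.norm_sum_le_of_forall_le_of_nonneg (by positivity)
    rintro ⟨i, j⟩ hij
    rw [Finset.HasAntidiagonal.mem_antidiagonal] at hij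
    rw [norm_mul]
    rcases le_or_gt N i with hi | hi
    · have h1 : ‖c i‖ < ε / 2 / B := hN i hi
      have h2 : ‖d j‖ ≤ B := hBd j
      nlinarith [norm_nonneg (c i), norm_nonneg (d j)]
    · have hj : M ≤ j := by omega
      have h1 : ‖d j‖ < ε / 2 / B := hM j hj
      have h2 : ‖c i‖ ≤ B := hBc i
      nlinarith [norm_nonneg (c i), norm_nonneg (d j)]
  linarith

lemma expansion_unique [CompleteSpace K] {a : K} (ha : ‖a‖ ≤ 1) {c c' : ℕ → K}
    (hc : Tendsto (fun n => ‖c n‖) atTop (𝓝 (0 : ℝ)))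
    (hc' : Tendsto (fun n => ‖c' n‖) atTop (𝓝 (0 : ℝ)))
    (h : ∀ k : ℕ, ∑' n : ℕ, c n * (n.choose k : K) * (-a) ^ (n - k)
        = ∑' n : ℕ, c' n * (n.choose k : K) * (-a) ^ (n - k)) :
    ∀ j, c j = c' j := by
  intro j
  rw [← inv_transform ha hc j, ← inv_transform ha hc' j]
  exact tsum_congr fun k => by rw [h k]

lemma one_transform (a : K) (k : ℕ) :
    ∑' n : ℕ, (if n = 0 then (1 : K) else 0) * (n.choose k : K) * (-a) ^ (n - k)
      = if k = 0 then 1 else 0 := by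
  rw [tsum_eq_single 0 (fun n hn => by simp [hn])]
  rcases eq_or_ne k 0 with rfl | hk
  · simp
  · simp [Nat.choose_eq_zero_of_lt (Nat.pos_of_ne_zero hk), hk]

lemma delta_tendsto : Tendsto (fun n : ℕ => ‖if n = 0 then (1 : K) else 0‖) atTop (𝓝 (0 : ℝ)) := by
  apply Tendsto.congr' (f₁ := fun _ : ℕ => (0 : ℝ))
  · filter_upwards [Filter.eventually_ge_atTop 1] with n hn
    rw [if_neg (by omega), norm_zero]
  · exact tendsto_const_nhds

lemma iSup_delta {ρ : ℝ} (hρ0 : 0 ≤ ρ) :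
    ⨆ n : ℕ, ‖if n = 0 then (1 : K) else 0‖ * ρ ^ n = 1 := by
  have hterm : ∀ n : ℕ, ‖if n = 0 then (1 : K) else 0‖ * ρ ^ n ≤ 1 := by
    intro n
    cases n with
    | zero => simp
    | succ m =>
      rw [if_neg (Nat.succ_ne_zero m), norm_zero, zero_mul]
      exact zero_le_one
  apply le_antisymm
  · exact ciSup_le hterm
  · have hb : BddAbove (Set.range fun n : ℕ => ‖if n = 0 then (1 : K) else 0‖ * ρ ^ n) :=
      ⟨1, by rintro y ⟨n, rfl⟩; exact hterm n⟩
    calc (1 : ℝ) = ‖if (0 : ℕ) = 0 then (1 : K) else 0‖ * ρ ^ 0 := by simp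
      _ ≤ _ := le_ciSup hb 0

end Anal

/-- `c` is the expansion of the power series `f` around the center `a`:
`f = ∑ c n (x - a)^n`, with coefficients tending to zero. -/
def IsExpansion {K : Type*} [NormedField K] (a : K) (f : PowerSeries K) (c : ℕ → K) :
    Prop :=
  Tendsto (fun n => ‖c n‖) atTop (𝓝 (0 : ℝ)) ∧
    ∀ k : ℕ, PowerSeries.coeff k f = ∑' n : ℕ, c n * (n.choose k : K) * (-a) ^ (n - k)

/-- The function f ↦ max_n |c_n| ρ^n (expansion around a center a with |a| ≤ 1) is a
multiplicative seminorm on the Tate algebra, bounded by the Gauss norm. -/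
theorem stmt16 (K : Type*) [NormedField K] [CompleteSpace K] [IsAlgClosed K]
    (hna : IsNonarchimedean (fun x : K => ‖x‖)) (hnt : ∃ x : K, 1 < ‖x‖)
    (a : K) (ha : ‖a‖ ≤ 1) (ρ : ℝ) (hρ0 : 0 ≤ ρ) (hρ1 : ρ ≤ 1)
    (f g : PowerSeries K)
    (hf : Tendsto (fun n => ‖PowerSeries.coeff n f‖) atTop (𝓝 (0 : ℝ)))
    (hg : Tendsto (fun n => ‖PowerSeries.coeff n g‖) atTop (𝓝 (0 : ℝ)))
    (cf cg cm cs c1 : ℕ → K)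
    (hcf : IsExpansion a f cf) (hcg : IsExpansion a g cg)
    (hcm : IsExpansion a (f * g) cm) (hcs : IsExpansion a (f + g) cs)
    (hc1 : IsExpansion a 1 c1) :
    (⨆ n : ℕ, ‖cm n‖ * ρ ^ n) = (⨆ n : ℕ, ‖cf n‖ * ρ ^ n) * (⨆ n : ℕ, ‖cg n‖ * ρ ^ n) ∧
      (⨆ n : ℕ, ‖cs n‖ * ρ ^ n) ≤
        max (⨆ n : ℕ, ‖cf n‖ * ρ ^ n) (⨆ n : ℕ, ‖cg n‖ * ρ ^ n) ∧
      (⨆ n : ℕ, ‖c1 n‖ * ρ ^ n) = 1 ∧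
      (⨆ n : ℕ, ‖cf n‖ * ρ ^ n) ≤ ⨆ n : ℕ, ‖PowerSeries.coeff n f‖ := by
  haveI : IsUltrametricDist K :=
    IsUltrametricDist.isUltrametricDist_of_isNonarchimedean_norm hna
  obtain ⟨hcf0, hcfE⟩ := hcf
  obtain ⟨hcg0, hcgE⟩ := hcg
  obtain ⟨hcm0, hcmE⟩ := hcm
  obtain ⟨hcs0, hcsE⟩ := hcs
  obtain ⟨hc10, hc1E⟩ := hc1
  -- Part 1 : multiplicativity
  have hE0 : Tendsto (fun n => ‖∑ ij ∈ Finset.HasAntidiagonal.antidiagonal n, cf ij.1 * cg ij.2‖) atTop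
      (𝓝 (0 : ℝ)) := conv_tendsto hcf0 hcg0
  have hEexp : ∀ k : ℕ, ∑' n : ℕ, cm n * (n.choose k : K) * (-a) ^ (n - k)
      = ∑' n : ℕ, (∑ ij ∈ Finset.HasAntidiagonal.antidiagonal n, cf ij.1 * cg ij.2) *
          (n.choose k : K) * (-a) ^ (n - k) := by
    intro k
    rw [conv_transform ha hcf0 hcg0 k, ← hcmE k]
    calc PowerSeries.coeff k (f * g)
        = ∑ pq ∈ Finset.HasAntidiagonal.antidiagonal k,
            PowerSeries.coeff pq.1 f * PowerSeries.coeff pq.2 g := PowerSeries.coeff_mul k f g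
      _ = ∑ pq ∈ Finset.HasAntidiagonal.antidiagonal k,
            (∑' m : ℕ, cf m * (m.choose pq.1 : K) * (-a) ^ (m - pq.1)) *
            (∑' l : ℕ, cg l * (l.choose pq.2 : K) * (-a) ^ (l - pq.2)) :=
          Finset.sum_congr rfl fun pq _ => by rw [hcfE pq.1, hcgE pq.2]
  have hcmeq : ∀ n, cm n = ∑ ij ∈ Finset.HasAntidiagonal.antidiagonal n, cf ij.1 * cg ij.2 :=
    expansion_unique ha hcm0 hE0 hEexp
  refine ⟨?_, ?_, ?_, ?_⟩
  · rw [show (fun n : ℕ => ‖cm n‖ * ρ ^ n)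
        = fun n : ℕ => ‖∑ ij ∈ Finset.HasAntidiagonal.antidiagonal n, cf ij.1 * cg ij.2‖ * ρ ^ n from
      funext fun n => by rw [hcmeq n]]
    exact gauss_mul hcf0 hcg0 hρ0 hρ1
  -- Part 2 : additivity
  · have hsum0 : Tendsto (fun n => ‖cf n + cg n‖) atTop (𝓝 (0 : ℝ)) := by
      have : Tendsto (fun n => ‖cf n‖ + ‖cg n‖) atTop (𝓝 (0 : ℝ)) := by
        simpa using hcf0.add hcg0
      exact squeeze_zero (fun n => norm_nonneg _) (fun n => norm_add_le _ _) this
    have hSexp : ∀ k : ℕ, ∑' n : ℕ, cs n * (n.choose k : K) * (-a) ^ (n - k)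
        = ∑' n : ℕ, (cf n + cg n) * (n.choose k : K) * (-a) ^ (n - k) := by
      intro k
      rw [← hcsE k]
      have hsf : Summable (fun n : ℕ => cf n * (n.choose k : K) * (-a) ^ (n - k)) :=
        summable_of_norm_le_null hcf0 fun n => by
          rw [mul_assoc]; exact norm_cnb_le (by rwa [norm_neg]) _ _ _
      have hsg : Summable (fun n : ℕ => cg n * (n.choose k : K) * (-a) ^ (n - k)) :=
        summable_of_norm_le_null hcg0 fun n => by
          rw [mul_assoc]; exact norm_cnb_le (by rwa [norm_neg]) _ _ _
      calc PowerSeries.coeff k (f + g)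
          = PowerSeries.coeff k f + PowerSeries.coeff k g := map_add _ f g
        _ = (∑' n : ℕ, cf n * (n.choose k : K) * (-a) ^ (n - k))
            + ∑' n : ℕ, cg n * (n.choose k : K) * (-a) ^ (n - k) := by rw [hcfE k, hcgE k]
        _ = ∑' n : ℕ, (cf n * (n.choose k : K) * (-a) ^ (n - k)
            + cg n * (n.choose k : K) * (-a) ^ (n - k)) := (Summable.tsum_add hsf hsg).symm
        _ = ∑' n : ℕ, (cf n + cg n) * (n.choose k : K) * (-a) ^ (n - k) :=
          tsum_congr fun n => by ring
    have hcseq : ∀ n, cs n = cf n + cg n := expansion_unique ha hcs0 hsum0 hSexp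
    have htf : Tendsto (fun n : ℕ => ‖cf n‖ * ρ ^ n) atTop (𝓝 (0 : ℝ)) := by
      refine squeeze_zero (fun n => by positivity) (fun n => ?_) hcf0
      have h1 : ρ ^ n ≤ 1 := pow_le_one₀ hρ0 hρ1
      nlinarith [norm_nonneg (cf n), pow_nonneg hρ0 n]
    have htg : Tendsto (fun n : ℕ => ‖cg n‖ * ρ ^ n) atTop (𝓝 (0 : ℝ)) := by
      refine squeeze_zero (fun n => by positivity) (fun n => ?_) hcg0
      have h1 : ρ ^ n ≤ 1 := pow_le_one₀ hρ0 hρ1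
      nlinarith [norm_nonneg (cg n), pow_nonneg hρ0 n]
    have hbf : BddAbove (Set.range fun n : ℕ => ‖cf n‖ * ρ ^ n) := htf.bddAbove_range
    have hbg : BddAbove (Set.range fun n : ℕ => ‖cg n‖ * ρ ^ n) := htg.bddAbove_range
    apply ciSup_le
    intro n
    rw [hcseq n]
    have h1 : ‖cf n + cg n‖ * ρ ^ n ≤ max (‖cf n‖ * ρ ^ n) (‖cg n‖ * ρ ^ n) := by
      rw [← max_mul_of_nonneg _ _ (pow_nonneg hρ0 n)]
      exact mul_le_mul_of_nonneg_right (hna (cf n) (cg n)) (pow_nonneg hρ0 n)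
    refine h1.trans (max_le_max (le_ciSup hbf n) (le_ciSup hbg n))
  -- Part 3 : the unit
  · have h1exp : ∀ k : ℕ, ∑' n : ℕ, c1 n * (n.choose k : K) * (-a) ^ (n - k)
        = ∑' n : ℕ, (if n = 0 then (1 : K) else 0) * (n.choose k : K) * (-a) ^ (n - k) := by
      intro k
      rw [one_transform, ← hc1E k]
      rw [PowerSeries.coeff_one]
    have hc1eq : ∀ n, c1 n = if n = 0 then (1 : K) else 0 :=
      expansion_unique ha hc10 delta_tendsto h1exp
    rw [show (fun n : ℕ => ‖c1 n‖ * ρ ^ n)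
        = fun n : ℕ => ‖if n = 0 then (1 : K) else 0‖ * ρ ^ n from
      funext fun n => by rw [hc1eq n]]
    exact iSup_delta hρ0
  -- Part 4 : bounded by the Gauss norm
  · have hfb : BddAbove (Set.range fun n : ℕ => ‖PowerSeries.coeff n f‖) :=
      hf.bddAbove_range
    have hG0 : 0 ≤ ⨆ n : ℕ, ‖PowerSeries.coeff n f‖ :=
      le_trans (norm_nonneg _) (le_ciSup hfb 0)
    have hcfb : ∀ j, ‖cf j‖ ≤ ⨆ n : ℕ, ‖PowerSeries.coeff n f‖ := by
      intro j
      have hinv := inv_transform ha hcf0 j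
      have heq : cf j = ∑' k : ℕ, PowerSeries.coeff k f * (k.choose j : K) * a ^ (k - j) := by
        rw [← hinv]
        exact (tsum_congr fun k => by rw [hcfE k]).symm
      rw [heq]
      apply IsUltrametricDist.norm_tsum_le_of_forall_le_of_nonneg hG0
      intro k
      calc ‖PowerSeries.coeff k f * (k.choose j : K) * a ^ (k - j)‖
          ≤ ‖PowerSeries.coeff k f‖ := by
            rw [mul_assoc]; exact norm_cnb_le ha _ _ _
        _ ≤ ⨆ n : ℕ, ‖PowerSeries.coeff n f‖ := le_ciSup hfb k
    apply ciSup_le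
    intro n
    calc ‖cf n‖ * ρ ^ n ≤ ‖cf n‖ :=
        mul_le_of_le_one_right (norm_nonneg _) (pow_le_one₀ hρ0 hρ1)
      _ ≤ _ := hcfb n
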